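/- arXiv:2107.05205 — 3 statements merged into one kernel-verified Lean document; each statement's English description precedes it below -/
import Mathlib

section
/- Let Φ be a finite root system with Weyl group W₀ acting on V = Y ⊗ ℝ, let σ be a finite-order automorphism of the root datum, and fix η ∈ Y. Choose M ≥ 2 with M·|⟨α, η⟩| > 2A for all α ∈ Φ with ⟨α, η⟩ ≠ 0, where A = max{|⟨α, η⟩| : α ∈ Φ}. For w̃ = t^μ w with μ a W₀-conjugate of η, define ν♭ = Σ_{i=0}^{N−1} p(w̃σ)^i(μ)/M^i, where N is the order of p(w̃σ) in W₀ ⋊ ⟨σ⟩. If α ∈ Φ, n ≥ 0, ⟨α, p(w̃σ)^n(μ)⟩ ≠ 0, and ⟨α, p(w̃σ)^i(μ)⟩ = 0 for 0 ≤ i ≤ n−1, then ⟨α, ν♭⟩ and ⟨α, p(w̃σ)^n(μ)⟩ have the same sign. -/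
/-!
Write `c i = ⟨α, φ^i μ⟩`, where `φ` stands for `p(w̃σ)` and `μ = ψ η`. Since `φ^i ψ` permutes the
roots compatibly with the pairing, each `c i` is a pairing `⟨β, η⟩` of a root with `η`, so
`|c i| ≤ A` and, when `c i ≠ 0`, `2A < M |c i|`. As `c` is `N`-periodic, the first nonzero index
`n` is less than `N`, and `⟨α, ν♭⟩ = c n / M^n + Σ_{n<i<N} c i / M^i`. The tail is bounded by
`A Σ_{i>n} M^{-i} ≤ 2A / M^(n+1) < |c n| / M^n`, so the leading term decides the sign.
-/

open Finset

theorem Function.Periodic.lt_of_forall_lt_eq_zero {α : Type*} [Zero α] {c : ℕ → α} {N n : ℕ}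
    (hc : Function.Periodic c N) (hN : 0 < N) (hn : c n ≠ 0) (hlt : ∀ i < n, c i = 0) :
    n < N := by
  by_contra! h
  apply hn
  rw [← Nat.sub_add_cancel h, hc (n - N)]
  exact hlt _ (by omega)

section PreservesPairing

variable {R V Phi X : Type*} [Semiring R] [AddCommMonoid V] [Module R V]

def PreservesPairing (pair : Phi → V → X) (g : V ≃ₗ[R] V) (π : Equiv.Perm Phi) : Prop :=
  ∀ α v, pair (π α) (g v) = pair α v

variable {pair : Phi → V → X} {g h : V ≃ₗ[R] V} {π ρ : Equiv.Perm Phi}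

theorem PreservesPairing.one : PreservesPairing pair (1 : V ≃ₗ[R] V) 1 := fun _ _ => rfl

theorem PreservesPairing.mul (hg : PreservesPairing pair g π) (hh : PreservesPairing pair h ρ) :
    PreservesPairing pair (g * h) (π * ρ) := fun α v => (hg _ _).trans (hh α v)

theorem PreservesPairing.pow (hg : PreservesPairing pair g π) (k : ℕ) :
    PreservesPairing pair (g ^ k) (π ^ k) := by
  induction k with
  | zero => exact PreservesPairing.one
  | succ k ih => rw [pow_succ, pow_succ]; exact ih.mul hg

theorem PreservesPairing.apply_eq (hg : PreservesPairing pair g π) (α : Phi) (v : V) :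
    pair α (g v) = pair (π⁻¹ α) v := by
  rw [← hg (π⁻¹ α) v]; simp

end PreservesPairing

theorem geom_sum_Ico_inv_le {M : ℝ} (hM : 2 ≤ M) (m N : ℕ) :
    ∑ i ∈ Ico m N, M⁻¹ ^ i ≤ 2 / M ^ m := by
  have hM0 : 0 < M := by linarith
  calc ∑ i ∈ Ico m N, M⁻¹ ^ i ≤ M⁻¹ ^ m / (1 - M⁻¹) :=
        geom_sum_Ico_le_of_lt_one (by positivity) (inv_lt_one_of_one_lt₀ (by linarith))
    _ ≤ M⁻¹ ^ m / (1 / 2) := by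
        have : M⁻¹ ≤ 1 / 2 := by rw [inv_le_comm₀ hM0 (by norm_num)]; linarith
        gcongr
        linarith
    _ = 2 / M ^ m := by rw [inv_pow]; ring

theorem abs_sum_Ico_div_pow_le {c : ℕ → ℝ} {A M : ℝ} (hM : 2 ≤ M) (hc : ∀ i, |c i| ≤ A)
    (m N : ℕ) : |∑ i ∈ Ico m N, c i / M ^ i| ≤ 2 * A / M ^ m := by
  have hA : 0 ≤ A := (abs_nonneg _).trans (hc 0)
  have hM0 : 0 < M := by linarith
  calc |∑ i ∈ Ico m N, c i / M ^ i| ≤ ∑ i ∈ Ico m N, |c i / M ^ i| := abs_sum_le_sum_abs _ _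
    _ ≤ ∑ i ∈ Ico m N, A * M⁻¹ ^ i := by
        gcongr with i
        rw [abs_div, abs_of_pos (pow_pos hM0 i), inv_pow, div_eq_mul_inv]
        gcongr
        exact hc i
    _ = A * ∑ i ∈ Ico m N, M⁻¹ ^ i := (mul_sum _ _ _).symm
    _ ≤ A * (2 / M ^ m) := by gcongr; exact geom_sum_Ico_inv_le hM m N
    _ = 2 * A / M ^ m := by ring

theorem sum_div_pow_mul_pos_of_leading {c : ℕ → ℝ} {A M : ℝ} {n N : ℕ} (hM : 2 ≤ M)
    (hc : ∀ i, |c i| ≤ A) (hcn : c n ≠ 0) (hlead : 2 * A < M * |c n|)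
    (hzero : ∀ i < n, c i = 0) (hnN : n < N) :
    0 < (∑ i ∈ range N, c i / M ^ i) * c n := by
  set T := ∑ i ∈ Ico (n + 1) N, c i / M ^ i
  have hsplit : ∑ i ∈ range N, c i / M ^ i = c n / M ^ n + T := by
    rw [← sum_range_add_sum_Ico _ hnN.le, sum_eq_sum_Ico_succ_bot hnN,
      sum_eq_zero fun i hi => by rw [hzero i (mem_range.mp hi), zero_div], zero_add]
  have hT : |T| < |c n| / M ^ n := by
    calc |T| ≤ 2 * A / M ^ (n + 1) := abs_sum_Ico_div_pow_le hM hc _ _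
      _ < M * |c n| / M ^ (n + 1) := by gcongr
      _ = |c n| / M ^ n := by rw [pow_succ]; field_simp
  have hcT : -(|T| * |c n|) ≤ T * c n := by rw [← abs_mul]; exact neg_abs_le _
  have hsq : c n / M ^ n * c n = |c n| / M ^ n * |c n| := by
    rw [div_mul_eq_mul_div, div_mul_eq_mul_div, abs_mul_abs_self]
  rw [hsplit, add_mul, hsq]
  nlinarith [mul_lt_mul_of_pos_right hT (abs_pos.mpr hcn)]

/-- Lemma: with `ν♭ = Σ_{i<N} p(w̃σ)^i(μ)/M^i` (M large), if `⟨α, p(w̃σ)^n(μ)⟩ ≠ 0` and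
`⟨α, p(w̃σ)^i(μ)⟩ = 0` for `0 ≤ i < n`, then `⟨α, ν♭⟩` and `⟨α, p(w̃σ)^n(μ)⟩` have the
same sign.  Here `φ` plays the role of the finite-order linear automorphism `p(w̃σ)` of
`V = Y ⊗ ℝ`, acting compatibly on the (finite) set of roots `Phi` via `permφ`, and
`μ = ψ(η)` is a conjugate of `η` under an element `ψ` of the group generated by `W₀` and
`σ` (also acting compatibly on the roots). -/
theorem stmt_3 {V Phi : Type*} [AddCommGroup V] [Module ℝ V]
    (pair : Phi → V → ℝ) (hlin : ∀ α, IsLinearMap ℝ (pair α))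
    (η : V) (A M : ℝ)
    (hA : ∀ α : Phi, |pair α η| ≤ A)
    (hM2 : 2 ≤ M)
    (hM : ∀ α : Phi, pair α η ≠ 0 → 2 * A < M * |pair α η|)
    (φ : V ≃ₗ[ℝ] V) (permφ : Equiv.Perm Phi)
    (hφ : ∀ (α : Phi) (v : V), pair (permφ α) (φ v) = pair α v)
    (N : ℕ) (hN : 0 < N) (hord : φ ^ N = 1)
    (ψ : V ≃ₗ[ℝ] V) (permψ : Equiv.Perm Phi)
    (hψ : ∀ (α : Phi) (v : V), pair (permψ α) (ψ v) = pair α v)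
    (μ : V) (hμ : μ = ψ η)
    (α : Phi) (n : ℕ)
    (hn1 : pair α ((φ ^ n) μ) ≠ 0)
    (hn2 : ∀ i < n, pair α ((φ ^ i) μ) = 0) :
    0 < pair α (∑ i ∈ Finset.range N, (1 / M ^ i) • (φ ^ i) μ) * pair α ((φ ^ n) μ) := by
  subst hμ
  set c : ℕ → ℝ := fun i => pair α ((φ ^ i) (ψ η))
  have hroot (i : ℕ) : c i = pair ((permφ ^ i * permψ)⁻¹ α) η :=
    ((PreservesPairing.pow hφ i).mul hψ).apply_eq α η
  have hper : Function.Periodic c N := fun i => by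
    simp only [c, pow_add, hord, mul_one]
  have hsum : pair α (∑ i ∈ range N, (1 / M ^ i) • (φ ^ i) (ψ η)) =
      ∑ i ∈ range N, c i / M ^ i := by
    have hmap := map_sum (IsLinearMap.mk' _ (hlin α))
      (fun i => (1 / M ^ i) • (φ ^ i) (ψ η)) (range N)
    simp only [IsLinearMap.mk'_apply, map_smul] at hmap
    simp only [hmap, smul_eq_mul, one_div_mul_eq_div, c]
  have hbound (i : ℕ) : |c i| ≤ A := by rw [hroot]; exact hA _
  have hlead : 2 * A < M * |c n| := by
    rw [hroot]; exact hM _ (by rw [← hroot]; exact hn1)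
  rw [hsum]
  exact sum_div_pow_mul_pos_of_leading hM2 hbound hn1 hlead hn2
    (hper.lt_of_forall_lt_eq_zero hN hn1 hn2)
end

section
/- With ν♭ defined as above for w̃ = t^μ w (μ a W₀-conjugate of η), we have ⟨α, ν♭⟩ = 0 if and only if ⟨α, p(w̃σ)^i(μ)⟩ = 0 for all i ∈ ℤ. -/
/-!
Every value `⟨α, φ^i μ⟩` is a pairing `⟨β, η⟩` of `η` with some root, so it is either `0` or
larger than `2A / M` in absolute value, while any tail `∑_j c_j / M^j` of such values is at
most `2A` in absolute value. Hence in `⟨α, ν♭⟩ = ∑_{i<N} ⟨α, φ^i μ⟩ / M^i` the first nonzero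
term cannot be cancelled by the later ones, and `⟨α, ν♭⟩ = 0` forces every term to vanish.
Since `φ^N = 1`, the terms with `i < N` already cover all integer powers of `φ`.
-/

open Finset

section DominantDigits

variable {A M : ℝ} {g : ℕ → ℝ}

theorem abs_sum_div_pow_le (hM : 2 ≤ M) (hA : ∀ j, |g j| ≤ A) (K : ℕ) :
    |∑ j ∈ range K, g j / M ^ j| ≤ 2 * A := by
  have hA0 : 0 ≤ A := (abs_nonneg _).trans (hA 0)
  have hM0 : 0 < M := by linarith
  calc |∑ j ∈ range K, g j / M ^ j|
      ≤ ∑ j ∈ range K, |g j| / M ^ j := by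
        refine (abs_sum_le_sum_abs _ _).trans_eq (sum_congr rfl fun j _ => ?_)
        rw [abs_div, abs_of_pos (pow_pos hM0 j)]
    _ ≤ ∑ j ∈ range K, A * (1 / 2) ^ j := by
        refine sum_le_sum fun j _ => ?_
        rw [one_div_pow, mul_one_div]
        exact div_le_div₀ hA0 (hA j) (by positivity) (pow_le_pow_left₀ (by norm_num) hM j)
    _ = A * ∑ j ∈ range K, (1 / 2 : ℝ) ^ j := (mul_sum _ _ _).symm
    _ ≤ 2 * A := by nlinarith [sum_geometric_two_le K]

theorem sum_range_succ_div_pow (K : ℕ) :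
    ∑ j ∈ range (K + 1), g j / M ^ j = g 0 + (∑ j ∈ range K, g (j + 1) / M ^ j) / M := by
  rw [sum_range_succ', sum_div, pow_zero, div_one, add_comm]
  simp only [pow_succ, div_div]

theorem eq_zero_of_sum_div_pow_eq_zero (hM : 2 ≤ M) (hA : ∀ j, |g j| ≤ A)
    (hdom : ∀ j, g j ≠ 0 → 2 * A < M * |g j|) {K : ℕ}
    (hsum : ∑ j ∈ range K, g j / M ^ j = 0) : ∀ j < K, g j = 0 := by
  induction K generalizing g with
  | zero => intro j hj; omega
  | succ K ih =>
    have hM0 : 0 < M := by linarith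
    set S := ∑ j ∈ range K, g (j + 1) / M ^ j
    rw [sum_range_succ_div_pow] at hsum
    have hg0 : g 0 = 0 := by
      by_contra hne
      have hS : |S| ≤ 2 * A := abs_sum_div_pow_le hM (fun j => hA (j + 1)) K
      have hg0S : M * |g 0| = |S| := by
        rw [show g 0 = -(S / M) by linarith, abs_neg, abs_div, abs_of_pos hM0]
        field_simp
      linarith [hdom 0 hne]
    have hS0 : S = 0 := by
      rw [hg0, zero_add, div_eq_zero_iff] at hsum
      exact hsum.resolve_right hM0.ne'
    rintro (_ | j) hj
    · exact hg0
    · exact ih (fun j => hA (j + 1)) (fun j => hdom (j + 1)) hS0 j (by omega)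

end DominantDigits

theorem forall_zpow_iff_forall_pow_lt {G : Type*} [Group G] {x : G} {N : ℕ} (hN : 0 < N)
    (hx : x ^ N = 1) {P : G → Prop} : (∀ i : ℤ, P (x ^ i)) ↔ ∀ i < N, P (x ^ i) := by
  refine ⟨fun h i _ => by simpa using h i, fun h i => ?_⟩
  have hN' : (0 : ℤ) < N := by exact_mod_cast hN
  have hnonneg : 0 ≤ i % N := Int.emod_nonneg i hN'.ne'
  have hlt : i % N < N := Int.emod_lt_of_pos i hN'
  rw [zpow_eq_zpow_emod' i hx, ← Int.toNat_of_nonneg hnonneg, zpow_natCast]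
  exact h _ (by omega)

theorem exists_pair_pow_apply_eq {V ι : Type*} [AddCommGroup V] [Module ℝ V]
    {pair : ι → V → ℝ} {φ : V ≃ₗ[ℝ] V} {σ : Equiv.Perm ι}
    (hφ : ∀ α v, pair (σ α) (φ v) = pair α v) (n : ℕ) (β : ι) (v : V) :
    ∃ γ, pair β ((φ ^ n) v) = pair γ v := by
  induction n generalizing β with
  | zero => exact ⟨β, rfl⟩
  | succ n ih =>
    obtain ⟨γ, hγ⟩ := ih (σ.symm β)
    refine ⟨γ, ?_⟩
    rw [pow_succ', LinearEquiv.mul_apply, ← hγ, ← hφ (σ.symm β), Equiv.apply_symm_apply]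

/-- Corollary: with `ν♭ = Σ_{i<N} p(w̃σ)^i(μ)/M^i` as before, one has `⟨α, ν♭⟩ = 0` if and
only if `⟨α, p(w̃σ)^i(μ)⟩ = 0` for all `i ∈ ℤ`.  Here `φ` is the finite-order linear
automorphism `p(w̃σ)` of `V = Y ⊗ ℝ` acting compatibly on the roots, and `μ = ψ(η)` is a
conjugate of `η` under the group generated by `W₀` and `σ`. -/
theorem stmt_4 {V Phi : Type*} [AddCommGroup V] [Module ℝ V]
    (pair : Phi → V → ℝ) (hlin : ∀ α, IsLinearMap ℝ (pair α))
    (η : V) (A M : ℝ)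
    (hA : ∀ α : Phi, |pair α η| ≤ A)
    (hM2 : 2 ≤ M)
    (hM : ∀ α : Phi, pair α η ≠ 0 → 2 * A < M * |pair α η|)
    (φ : V ≃ₗ[ℝ] V) (permφ : Equiv.Perm Phi)
    (hφ : ∀ (α : Phi) (v : V), pair (permφ α) (φ v) = pair α v)
    (N : ℕ) (hN : 0 < N) (hord : φ ^ N = 1)
    (ψ : V ≃ₗ[ℝ] V) (permψ : Equiv.Perm Phi)
    (hψ : ∀ (α : Phi) (v : V), pair (permψ α) (ψ v) = pair α v)
    (μ : V) (hμ : μ = ψ η) (α : Phi) :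
    pair α (∑ i ∈ Finset.range N, (1 / M ^ i) • (φ ^ i) μ) = 0 ↔
      ∀ i : ℤ, pair α ((φ ^ i) μ) = 0 := by
  set f : ℕ → ℝ := fun i => pair α ((φ ^ i) μ)
  have hf_root : ∀ i, ∃ β, f i = pair β η := fun i => by
    obtain ⟨γ, hγ⟩ := exists_pair_pow_apply_eq hφ i α μ
    obtain ⟨β, hβ⟩ := exists_pair_pow_apply_eq hψ 1 γ η
    exact ⟨β, by rw [← hβ, pow_one, ← hμ]; exact hγ⟩
  have hsum : pair α (∑ i ∈ range N, (1 / M ^ i) • (φ ^ i) μ) = ∑ i ∈ range N, f i / M ^ i := by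
    simp only [← IsLinearMap.mk'_apply (hlin α), map_sum, map_smul, smul_eq_mul,
      one_div_mul_eq_div, f]
  rw [hsum, forall_zpow_iff_forall_pow_lt hN hord (P := fun χ => pair α (χ μ) = 0)]
  refine ⟨eq_zero_of_sum_div_pow_eq_zero hM2 (g := f) (A := A) ?_ ?_, ?_⟩
  · intro i; obtain ⟨β, hβ⟩ := hf_root i; rw [hβ]; exact hA β
  · intro i; obtain ⟨β, hβ⟩ := hf_root i; rw [hβ]; exact hM β
  · intro h
    exact sum_eq_zero fun i hi => by rw [show f i = 0 from h i (mem_range.1 hi), zero_div]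
end

section
/- With ν♭ as above, for any z ∈ W₀ one has ν♭(z w̃ σ(z)⁻¹) = z(ν♭(w̃)), i.e. the flat Newton vector transforms by the Weyl group under σ-conjugation. -/
theorem LinearEquiv.conj_pow_apply {R V : Type*} [Semiring R] [AddCommMonoid V] [Module R V]
    (ζ φ : V ≃ₗ[R] V) (i : ℕ) (v : V) :
    ((ζ * φ * ζ⁻¹) ^ i) (ζ v) = ζ ((φ ^ i) v) := by
  rw [conj_pow]
  exact congrArg ζ (congrArg (φ ^ i) (ζ.symm_apply_apply v))

/-- Here `φ = p(w̃σ)` is a finite-order linear automorphism of `V = Y ⊗ ℝ`, `μ` is the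
translation part of `w̃` and `ζ` the linear action of `z`; the `σ`-conjugate `z w̃ σ(z)⁻¹` has
translation part `z(μ)` and `p`-part `z φ z⁻¹`. -/
theorem stmt_5_general {V : Type*} [AddCommGroup V] [Module ℝ V]
    (M : ℝ)
    (φ : V ≃ₗ[ℝ] V) (N : ℕ)
    (μ : V) (ζ : V ≃ₗ[ℝ] V) :
    ∑ i ∈ Finset.range N, (1 / M ^ i) • ((ζ * φ * ζ⁻¹) ^ i) (ζ μ) =
      ζ (∑ i ∈ Finset.range N, (1 / M ^ i) • (φ ^ i) μ) := by
  simp only [LinearEquiv.conj_pow_apply, map_sum, map_smul]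

/-- Corollary: `ν♭(z w̃ σ(z)⁻¹) = z(ν♭(w̃))` for `z ∈ W₀`.  Here `φ = p(w̃σ)` is a
finite-order linear automorphism of `V = Y ⊗ ℝ` and `μ` is the translation part of `w̃`;
the `σ`-conjugate `z w̃ σ(z)⁻¹` has translation part `z(μ)` and `p`-part `z φ z⁻¹`
(with `ζ` the linear action of `z`), so its flat Newton vector is
`Σ_{i<N} (ζφζ⁻¹)^i (ζμ) / M^i`. -/
theorem stmt_5 {V : Type*} [AddCommGroup V] [Module ℝ V]
    (M : ℝ) (hM2 : 2 ≤ M)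
    (φ : V ≃ₗ[ℝ] V) (N : ℕ) (hN : 0 < N) (hord : φ ^ N = 1)
    (μ : V) (ζ : V ≃ₗ[ℝ] V) :
    ∑ i ∈ Finset.range N, (1 / M ^ i) • ((ζ * φ * ζ⁻¹) ^ i) (ζ μ) =
      ζ (∑ i ∈ Finset.range N, (1 / M ^ i) • (φ ^ i) μ) :=
  stmt_5_general M φ N μ ζ
end
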